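/- For every even natural number k ≥ 2 and every real x ∈ [-1,1], the series ∑_{n=1}^∞ (-1)^{n+1} sin(nπx)/n^{k+1} converges absolutely and F_k(x) = 2·(-1)^{k/2} · π^{-(k+1)} · ∑_{n=1}^∞ (-1)^{n+1} sin(nπx)/n^{k+1}. -/

import Mathlib

open Polynomial
open scoped Nat

noncomputable def Gaux (k : ℕ) : Polynomial ℝ :=
  Polynomial.C ((2:ℝ)^(k+1) / (k+1)!) *
    ((Polynomial.bernoulli (k+1)).map (algebraMap ℚ ℝ)).comp
      (Polynomial.C (2⁻¹ : ℝ) * (Polynomial.X + 1))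

lemma Gaux_zero : Gaux 0 = Polynomial.X := by
  have h1 : (Polynomial.bernoulli 1 : ℚ[X]) = Polynomial.X - Polynomial.C (1/2) := by
    simp [Polynomial.bernoulli_def, Finset.sum_range_succ,
      ← Polynomial.monomial_one_one_eq_X]
    rw [show (-1/2 : ℚ) = -(2⁻¹) by norm_num, map_neg]
    ring
  apply Polynomial.funext
  intro y
  simp [Gaux, h1]
  ring

lemma Gaux_deriv (k : ℕ) : Polynomial.derivative (Gaux (k+1)) = Gaux k := by
  unfold Gaux
  rw [Polynomial.derivative_C_mul, Polynomial.derivative_comp, Polynomial.derivative_map,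
    Polynomial.derivative_bernoulli_add_one, Polynomial.map_mul,
    show ((k+1 : ℕ) : ℚ[X]) + 1 = ((k+2 : ℕ) : ℚ[X]) by push_cast; ring,
    Polynomial.map_natCast]
  apply Polynomial.funext
  intro y
  have h3 : ((k+1)! : ℝ) ≠ 0 := by positivity
  have h4 : ((k+2)! : ℝ) ≠ 0 := by positivity
  simp [Nat.factorial_succ (k+1), Polynomial.eval_comp]
  field_simp
  ring

lemma Gaux_eval (k : ℕ) (x : ℝ) : (Gaux k).eval x =
    (2:ℝ)^(k+1) / (k+1)! * bernoulliFun (k+1) ((x+1)/2) := by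
  simp only [Gaux, bernoulliFun, Polynomial.eval_mul, Polynomial.eval_C, Polynomial.eval_comp,
    Polynomial.eval_add, Polynomial.eval_X, Polynomial.eval_one]
  ring_nf

lemma Gaux_int (k : ℕ) : ∫ x in (-1 : ℝ)..1, (Gaux (k+1)).eval x = 0 := by
  have h : ∀ x : ℝ, (Gaux (k+1)).eval x =
      (2:ℝ)^(k+2) / (k+2)! * bernoulliFun (k+2) (2⁻¹ * x + 2⁻¹) := by
    intro x
    rw [Gaux_eval]
    ring_nf
  simp_rw [h, intervalIntegral.integral_const_mul]
  rw [intervalIntegral.integral_comp_mul_add (bernoulliFun (k+2)) (by norm_num : (2:ℝ)⁻¹ ≠ 0) 2⁻¹]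
  norm_num
  rw [integral_bernoulliFun_eq_zero (by omega)]
  simp

lemma F_eq_Gaux (F : ℕ → Polynomial ℝ)
    (hF0 : F 0 = Polynomial.X)
    (hFd : ∀ k : ℕ, Polynomial.derivative (F (k + 1)) = F k)
    (hFi : ∀ k : ℕ, ∫ x in (-1 : ℝ)..1, (F (k + 1)).eval x = 0) :
    ∀ k, F k = Gaux k := by
  intro k
  induction k with
  | zero => rw [hF0, Gaux_zero]
  | succ k ih =>
    have hd : Polynomial.derivative (F (k+1) - Gaux (k+1)) = 0 := by
      rw [Polynomial.derivative_sub, hFd, Gaux_deriv, ih, sub_self]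
    have hc := Polynomial.eq_C_of_derivative_eq_zero hd
    set c := (F (k+1) - Gaux (k+1)).coeff 0 with hcdef
    have hint : ∫ x in (-1 : ℝ)..1, (F (k+1) - Gaux (k+1)).eval x = 0 := by
      have : ∀ x : ℝ, (F (k+1) - Gaux (k+1)).eval x = (F (k+1)).eval x - (Gaux (k+1)).eval x := by
        simp
      simp_rw [this]
      rw [intervalIntegral.integral_sub ((Polynomial.continuous _).intervalIntegrable _ _)
        ((Polynomial.continuous _).intervalIntegrable _ _), hFi, Gaux_int, sub_self]
    rw [hc] at hint
    simp at hint
    have : F (k+1) - Gaux (k+1) = 0 := by rw [hc, hint]; simp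
    exact sub_eq_zero.mp this

/-- Let `F 0 = X` and, inductively, `F (k+1)` be the unique polynomial
with derivative `F k` and mean zero on `[-1,1]`.  For every even `k ≥ 2` and every
`x ∈ [-1,1]`, the series `∑_{n=1}^∞ (-1)^{n+1} sin(nπx)/n^{k+1}` converges absolutely and
`F k (x) = 2 (-1)^{k/2} π^{-(k+1)} ∑_{n=1}^∞ (-1)^{n+1} sin(nπx)/n^{k+1}`. -/
theorem stmt7 (F : ℕ → Polynomial ℝ)
    (hF0 : F 0 = Polynomial.X)
    (hFd : ∀ k : ℕ, Polynomial.derivative (F (k + 1)) = F k)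
    (hFi : ∀ k : ℕ, ∫ x in (-1 : ℝ)..1, (F (k + 1)).eval x = 0)
    (k : ℕ) (hk : Even k) (hk2 : 2 ≤ k) (x : ℝ) (hx : x ∈ Set.Icc (-1 : ℝ) 1) :
    Summable (fun n : ℕ =>
        |(-1 : ℝ) ^ (n + 1 + 1) * Real.sin ((n + 1) * Real.pi * x) / (n + 1) ^ (k + 1)|) ∧
      (F k).eval x = 2 * (-1 : ℝ) ^ (k / 2) / Real.pi ^ (k + 1) *
        ∑' n : ℕ, (-1 : ℝ) ^ (n + 1 + 1) * Real.sin ((n + 1) * Real.pi * x) / (n + 1) ^ (k + 1) := by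
  have hFG : ∀ k, F k = Gaux k := F_eq_Gaux F hF0 hFd hFi
  obtain ⟨m, hm⟩ := hk
  have hm0 : m ≠ 0 := by omega
  have hk2m : k = 2 * m := by omega
  have hkd : k / 2 = m := by omega
  have hx' : (x + 1) / 2 ∈ Set.Icc (0:ℝ) 1 := by
    constructor <;> [linarith [hx.1]; linarith [hx.2]]
  have hπ : Real.pi ≠ 0 := Real.pi_ne_zero
  set B : ℝ := bernoulliFun (k+1) ((x+1)/2) with hB
  have S0 := hasSum_one_div_nat_pow_mul_sin hm0 hx'
  rw [← hk2m] at S0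
  set S : ℝ := (-1 : ℝ) ^ (m + 1) * (2 * Real.pi) ^ (k + 1) / 2 / (k + 1)! * B with hS
  set f : ℕ → ℝ := fun n => (-1:ℝ)^n * Real.sin (n * Real.pi * x) / (n:ℝ)^(k+1) with hf
  have S1 : HasSum f S := by
    convert S0 using 2 with n
    rw [show 2 * Real.pi * n * ((x + 1) / 2) = n * Real.pi * x + n * Real.pi by ring,
      Real.sin_add_nat_mul_pi]
    ring
    rw [hB]; rfl
  have S2 : HasSum (fun n : ℕ => f (n + 1)) S := by
    refine (hasSum_nat_add_iff 1).2 ?_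
    simpa [hf] using S1
  have S3 : HasSum (fun n : ℕ =>
      (-1:ℝ)^(n+1+1) * Real.sin (((n:ℝ)+1) * Real.pi * x) / ((n:ℝ)+1)^(k+1)) (-S) := by
    convert S2.neg using 2 with n
    · rfl
    simp only [hf]
    push_cast
    ring
  constructor
  · have hsum : Summable (fun n : ℕ => 1/((n:ℝ)+1)^(k+1)) := by
      have h0 := Real.summable_one_div_nat_pow.2 (show 2 ≤ k+1 by omega)
      have := (summable_nat_add_iff (f := fun n : ℕ => 1/(n:ℝ)^(k+1)) 1).2 h0
      simpa using this
    refine Summable.of_nonneg_of_le (fun n => abs_nonneg _) (fun n => ?_) hsum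
    rw [abs_div]
    have h2 : |((n:ℝ)+1)^(k+1)| = ((n:ℝ)+1)^(k+1) := abs_of_pos (by positivity)
    rw [h2]
    have h1 : |(-1:ℝ)^(n+1+1) * Real.sin (((n:ℝ)+1) * Real.pi * x)| ≤ 1 := by
      rw [abs_mul, abs_pow, abs_neg, abs_one, one_pow, one_mul]
      exact Real.abs_sin_le_one _
    gcongr
  · rw [S3.tsum_eq, hFG, Gaux_eval, hS, hkd, ← hB]
    have h3 : ((k+1)! : ℝ) ≠ 0 := by positivity
    rw [mul_pow, pow_succ]
    field_simp
    ring_nf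
    rw [pow_mul, ← pow_mul, mul_comm m 2, pow_mul]
    norm_num
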